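/- Let N be an even positive integer, let A ⊆ [N] with |A| = N/2, and let 0 ≤ a ≤ 1. Define probability distributions p_1 and p_2 on [N] by p_1[y] = 2/N for y ∈ A and p_1[y] = 0 for y ∉ A; p_2[y] = (2−a)/N for y ∈ A and p_2[y] = a/N for y ∉ A. Then KL(p_1, (p_1+p_2)/2) = log(4/(4−a)), and consequently for every probability distribution q on [N] (with q[y] > 0 for all y ∈ [N]), max{ KL(p_1, q), KL(p_2, q) } ≥ a/16. -/

import Mathlib

/-!
With `m = (p₁ + p₂) / 2`, the compensation identity
`KL(p₁‖q) + KL(p₂‖q) = KL(p₁‖m) + KL(p₂‖m) + 2 KL(m‖q)` together with Gibbs' inequality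
`KL ≥ 0` bounds `KL(p₁‖q) + KL(p₂‖q)` below by `KL(p₁‖m)`. For the hard pair `p₁ / m` is
`4 / (4 - a)` on `A` and `p₁` vanishes off `A`, so `KL(p₁‖m) = log (4 / (4 - a)) ≥ a / 4`,
and the larger of the two divergences is at least `a / 8`.
-/

open Finset

/-- `p` is a probability distribution on the finite set `Y`. -/
def IsDist {Y : Type*} [Fintype Y] (p : Y → ℝ) : Prop :=
  (∀ y, 0 ≤ p y) ∧ ∑ y, p y = 1

/-- Kullback–Leibler divergence between distributions on a finite set
(real-valued formula, with the convention `0 · log 0 = 0`). -/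
noncomputable def klR {Y : Type*} [Fintype Y] (p q : Y → ℝ) : ℝ :=
  ∑ y, p y * Real.log (p y / q y)

lemma sub_le_mul_log_div {p m : ℝ} (hp : 0 ≤ p) (hm : 0 ≤ m) (h : p ≠ 0 → m ≠ 0) :
    p - m ≤ p * Real.log (p / m) := by
  rcases hp.eq_or_lt with rfl | hp
  · simpa using hm
  have hm : 0 < m := hm.lt_of_ne' (h hp.ne')
  have := Real.one_sub_inv_le_log_of_pos (div_pos hp hm)
  calc p - m = p * (1 - (p / m)⁻¹) := by field_simp
    _ ≤ p * Real.log (p / m) := by gcongr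

lemma mul_log_div_eq_add {p m q : ℝ} (hq : q ≠ 0) (h : p ≠ 0 → m ≠ 0) :
    p * Real.log (p / q) = p * Real.log (p / m) + p * Real.log (m / q) := by
  rcases eq_or_ne p 0 with rfl | hp
  · simp
  rw [Real.log_div hp hq, Real.log_div hp (h hp), Real.log_div (h hp) hq]
  ring

section KL

variable {Y : Type*} [Fintype Y] {p m q : Y → ℝ}

lemma sum_sub_sum_le_klR (hp : ∀ y, 0 ≤ p y) (hm : ∀ y, 0 ≤ m y)
    (hpm : ∀ y, p y ≠ 0 → m y ≠ 0) : ∑ y, p y - ∑ y, m y ≤ klR p m := by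
  rw [← sum_sub_distrib]
  exact sum_le_sum fun y _ => sub_le_mul_log_div (hp y) (hm y) (hpm y)

variable {p₁ p₂ : Y → ℝ}

lemma klR_add_klR_eq (hp₁ : ∀ y, 0 ≤ p₁ y) (hp₂ : ∀ y, 0 ≤ p₂ y) (hq : ∀ y, q y ≠ 0) :
    klR p₁ q + klR p₂ q =
      klR p₁ (fun y => (p₁ y + p₂ y) / 2) + klR p₂ (fun y => (p₁ y + p₂ y) / 2)
        + 2 * klR (fun y => (p₁ y + p₂ y) / 2) q := by
  have hm₁ : ∀ y, p₁ y ≠ 0 → (p₁ y + p₂ y) / 2 ≠ 0 := fun y h => by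
    have := (hp₁ y).lt_of_ne' h; have := hp₂ y; positivity
  have hm₂ : ∀ y, p₂ y ≠ 0 → (p₁ y + p₂ y) / 2 ≠ 0 := fun y h => by
    have := (hp₂ y).lt_of_ne' h; have := hp₁ y; positivity
  simp only [klR, mul_sum, ← sum_add_distrib]
  refine sum_congr rfl fun y _ => ?_
  rw [mul_log_div_eq_add (hq y) (hm₁ y), mul_log_div_eq_add (hq y) (hm₂ y)]
  ring

lemma klR_midpoint_le_klR_add_klR (hp₁ : IsDist p₁) (hp₂ : IsDist p₂) (hq : ∑ y, q y = 1)
    (hq₀ : ∀ y, 0 < q y) :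
    klR p₁ (fun y => (p₁ y + p₂ y) / 2) ≤ klR p₁ q + klR p₂ q := by
  set m := fun y => (p₁ y + p₂ y) / 2
  have hm : ∀ y, 0 ≤ m y := fun y => by have := hp₁.1 y; have := hp₂.1 y; positivity
  have hsum_m : ∑ y, m y = 1 := by
    simp only [m, ← sum_div, sum_add_distrib, hp₁.2, hp₂.2]
    norm_num
  have h₂ : 0 ≤ klR p₂ m := by
    have := sum_sub_sum_le_klR hp₂.1 hm fun y h => by
      have := (hp₂.1 y).lt_of_ne' h; have := hp₁.1 y; positivity
    rwa [hp₂.2, hsum_m, sub_self] at this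
  have hmq : 0 ≤ klR m q := by
    have := sum_sub_sum_le_klR hm (fun y => (hq₀ y).le) fun y _ => (hq₀ y).ne'
    rwa [hq, hsum_m, sub_self] at this
  rw [klR_add_klR_eq hp₁.1 hp₂.1 fun y => (hq₀ y).ne']
  linarith

end KL

lemma sum_ite_mem_of_two_mul_card_eq {Y : Type*} [Fintype Y] [DecidableEq Y] {A : Finset Y}
    (hA : 2 * #A = Fintype.card Y) (u v : ℝ) :
    ∑ y, (if y ∈ A then u else v) = Fintype.card Y / 2 * (u + v) := by
  have hAc : #Aᶜ = #A := by rw [card_compl]; omega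
  rw [← sum_add_sum_compl A, sum_ite_of_true fun _ h => h,
    sum_ite_of_false fun _ h => mem_compl.1 h, sum_const, sum_const, hAc, ← hA]
  push_cast
  ring

section HardPair

variable {N : ℕ} {A : Finset (Fin N)} {a : ℝ} {p₁ p₂ : Fin N → ℝ}

lemma isDist_hardPair_left (hN : (N : ℝ) ≠ 0) (hA : 2 * #A = N)
    (hp₁ : ∀ y, p₁ y = if y ∈ A then 2 / (N : ℝ) else 0) : IsDist p₁ := by
  refine ⟨fun y => by rw [hp₁]; split_ifs <;> positivity, ?_⟩
  simp only [hp₁]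
  rw [sum_ite_mem_of_two_mul_card_eq (by simpa using hA), Fintype.card_fin, add_zero]
  field_simp

lemma isDist_hardPair_right (hN : (N : ℝ) ≠ 0) (hA : 2 * #A = N) (ha₀ : 0 ≤ a) (ha₂ : a ≤ 2)
    (hp₂ : ∀ y, p₂ y = if y ∈ A then (2 - a) / (N : ℝ) else a / (N : ℝ)) : IsDist p₂ := by
  have hN₀ : (0 : ℝ) ≤ N := N.cast_nonneg
  refine ⟨fun y => by rw [hp₂]; split_ifs <;> apply div_nonneg <;> linarith, ?_⟩
  simp only [hp₂]
  rw [sum_ite_mem_of_two_mul_card_eq (by simpa using hA), Fintype.card_fin]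
  field_simp
  ring

lemma klR_hardPair_midpoint (hN : (N : ℝ) ≠ 0) (hA : 2 * #A = N) (ha : a ≠ 4)
    (hp₁ : ∀ y, p₁ y = if y ∈ A then 2 / (N : ℝ) else 0)
    (hp₂ : ∀ y, p₂ y = if y ∈ A then (2 - a) / (N : ℝ) else a / (N : ℝ)) :
    klR p₁ (fun y => (p₁ y + p₂ y) / 2) = Real.log (4 / (4 - a)) := by
  have h4a : 4 - a ≠ 0 := sub_ne_zero.2 (Ne.symm ha)
  have hterm : ∀ y, p₁ y * Real.log (p₁ y / ((p₁ y + p₂ y) / 2)) =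
      if y ∈ A then 2 / N * Real.log (4 / (4 - a)) else 0 := fun y => by
    rw [hp₁, hp₂]
    split_ifs
    · rw [show (2 / (N : ℝ) + (2 - a) / N) / 2 = (4 - a) / (2 * N) by ring]
      field_simp
      norm_num
    · simp
  rw [klR, sum_congr rfl fun y _ => hterm y, sum_ite_mem_of_two_mul_card_eq (by simpa using hA),
    Fintype.card_fin, add_zero]
  field_simp

end HardPair

/-- **The hard pair of distributions in the lower-bound construction.**
For `A ⊆ [N]` of size `N/2` and `0 ≤ a ≤ 1`, let `p₁` be uniform on `A` and let
`p₂[y] = (2−a)/N` on `A` and `a/N` off `A`.  Then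
`KL(p₁, (p₁+p₂)/2) = log(4/(4−a))`, and consequently every everywhere-positive distribution
`q` satisfies `max{KL(p₁,q), KL(p₂,q)} ≥ a/16`. -/
theorem hard_pair (N : ℕ) (hN : 0 < N) (hNeven : Even N)
    (A : Finset (Fin N)) (hA : A.card = N / 2)
    (a : ℝ) (ha : a ∈ Set.Icc (0 : ℝ) 1)
    (p₁ p₂ : Fin N → ℝ)
    (hp₁ : ∀ y, p₁ y = if y ∈ A then 2 / (N : ℝ) else 0)
    (hp₂ : ∀ y, p₂ y = if y ∈ A then (2 - a) / (N : ℝ) else a / (N : ℝ)) :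
    klR p₁ (fun y => (p₁ y + p₂ y) / 2) = Real.log (4 / (4 - a)) ∧
    ∀ q : Fin N → ℝ, IsDist q → (∀ y, 0 < q y) →
      a / 16 ≤ max (klR p₁ q) (klR p₂ q) := by
  obtain ⟨ha₀, ha₁⟩ := ha
  have hN₀ : (N : ℝ) ≠ 0 := by positivity
  have hA₂ : 2 * #A = N := by rw [hA]; exact Nat.two_mul_div_two_of_even hNeven
  have hmid := klR_hardPair_midpoint hN₀ hA₂ (by linarith) hp₁ hp₂
  refine ⟨hmid, fun q hq hq₀ => ?_⟩
  have hsum := klR_midpoint_le_klR_add_klR (isDist_hardPair_left hN₀ hA₂ hp₁)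
    (isDist_hardPair_right hN₀ hA₂ ha₀ (by linarith) hp₂) hq.2 hq₀
  have hlog : a / 4 ≤ Real.log (4 / (4 - a)) := by
    have := Real.one_sub_inv_le_log_of_pos (show 0 < 4 / (4 - a) by apply div_pos <;> linarith)
    rw [inv_div] at this
    linarith [show 1 - (4 - a) / 4 = a / 4 by ring]
  linarith [le_max_left (klR p₁ q) (klR p₂ q), le_max_right (klR p₁ q) (klR p₂ q)]
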